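/- In the m-gluing graph K_n +_m K'_n with n ≥ 5 and 1 ≤ m ≤ n−2, the Ricci curvature of the bridge edge (u_0, v_0) equals (4m − 2n + 4)/(n + m); in particular κ(u_0, v_0) ≥ 0 if and only if m ≥ (n−2)/2. -/

import Mathlib

open scoped Classical
noncomputable section

namespace OR

variable {V : Type*}

/-- The degree of a vertex. -/
def deg (G : SimpleGraph V) (x : V) : ℕ := Nat.card (G.neighborSet x)

/-- The simple random walk measure at a vertex. -/
def rw (G : SimpleGraph V) (x : V) : V → ℝ :=
  fun v => if G.Adj x v then ((deg G x : ℝ))⁻¹ else 0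

/-- A coupling between two measures on the vertex set. -/
def IsCoupling (μ ν : V → ℝ) (A : V → V → ℝ) : Prop :=
  (∀ u v, 0 ≤ A u v) ∧
  (Function.support fun p : V × V => A p.1 p.2).Finite ∧
  (∀ u, ∑ᶠ v, A u v = μ u) ∧ (∀ v, ∑ᶠ u, A u v = ν v)

/-- The 1-Wasserstein distance w.r.t. the graph distance. -/
def W (G : SimpleGraph V) (μ ν : V → ℝ) : ℝ :=
  sInf { r | ∃ A, IsCoupling μ ν A ∧ r = ∑ᶠ u, ∑ᶠ v, A u v * (G.dist u v : ℝ) }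

/-- The Ollivier–Ricci curvature. -/
def ricci (G : SimpleGraph V) (x y : V) : ℝ :=
  1 - W G (rw G x) (rw G y) / (G.dist x y : ℝ)

/-- The number of common neighbours of `x` and `y`. -/
def tri (G : SimpleGraph V) (x y : V) : ℕ := Nat.card {w | G.Adj x w ∧ G.Adj y w}



/-- Condition for a cross edge `u_i v_j` in the `m`-gluing graph. -/
def cross (m : ℕ) {n : ℕ} (i j : Fin n) : Prop :=
  ((i : ℕ) = 0 ∧ (j : ℕ) = 0) ∨ ((i : ℕ) = 0 ∧ 1 ≤ (j : ℕ) ∧ (j : ℕ) ≤ m) ∨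
    ((j : ℕ) = 0 ∧ 1 ≤ (i : ℕ) ∧ (i : ℕ) ≤ m)

/-- Adjacency of the `m`-gluing graph: `Sum.inl` is `K_n`, `Sum.inr` is `K'_n`. -/
def glueAdj (n m : ℕ) : Fin n ⊕ Fin n → Fin n ⊕ Fin n → Prop
  | .inl i, .inl j => i ≠ j
  | .inr i, .inr j => i ≠ j
  | .inl i, .inr j => cross m i j
  | .inr j, .inl i => cross m i j

/-- The `m`-gluing graph `K_n +_m K'_n`. -/
def glue (n m : ℕ) : SimpleGraph (Fin n ⊕ Fin n) where
  Adj := glueAdj n m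
  symm := by
    constructor
    rintro (i | i) (j | j) h <;> simp only [glueAdj] at h ⊢
    · exact h.symm
    · exact h
    · exact h
    · exact h.symm
  loopless := by
    constructor
    rintro (i | i) h <;> simp only [glueAdj] at h <;> exact h rfl

end OR

/-!
Both random-walk measures are uniform on `n + m` vertices. The transport plan is induced by an
involution that fixes the `2m` common neighbours of `u_0` and `v_0`, moves `u_{m+1} ↦ u_0` and
`v_0 ↦ v_{m+1}` at cost 1 and `u_i ↦ v_i` (`i ≥ m + 2`) at cost 3, so its cost is
`(3n - 3m - 4)/(n + m)`. It is optimal because the potential equal to `2, 3, 1, 0` on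
`u_{≤m}, u_{>m}, v_{≤m}, v_{>m}` is 1-Lipschitz and drops along every move of the plan by exactly
its cost (weak Kantorovich duality). As `u_0 ∼ v_0`, the curvature is `1 - W`.
-/

namespace OR

open Finset

def blocks {M : Type*} (m : ℕ) (a b c d : M) (j : ℕ) : M :=
  if j = 0 then a else if j ≤ m then b else if j = m + 1 then c else d

theorem sum_blocks {M : Type*} [CommRing M] {n m : ℕ} (hmn : m + 2 ≤ n) (a b c d : M) :
    ∑ j : Fin n, blocks m a b c d j = a + m * b + c + (n - m - 2) * d := by
  obtain ⟨k, rfl⟩ := Nat.exists_eq_add_of_le hmn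
  rw [Fin.sum_univ_eq_sum_range (blocks m a b c d), sum_range_add, sum_range_succ,
    sum_range_succ']
  have hmid : ∑ j ∈ range m, blocks m a b c d (j + 1) = m * b := by
    rw [sum_congr rfl fun j hj => by
      rw [blocks, if_neg (by omega), if_pos (by rw [mem_range] at hj; omega)]]
    simp only [sum_const, card_range, nsmul_eq_mul]
  have htop : ∑ j ∈ range k, blocks m a b c d (m + 1 + 1 + j) = k * d := by
    rw [sum_congr rfl fun j _ => by
      rw [blocks, if_neg (by omega), if_neg (by omega), if_neg (by omega)]]
    simp only [sum_const, card_range, nsmul_eq_mul]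
  have hzero : blocks m a b c d 0 = a := if_pos rfl
  have hnext : blocks m a b c d (m + 1) = c := by
    rw [blocks, if_neg (by omega), if_neg (by omega), if_pos rfl]
  rw [hmid, htop, hzero, hnext]
  push_cast
  ring

section Transport

variable {V : Type*} {G : SimpleGraph V}

theorem sub_le_dist_of_adj {f : V → ℝ} (hf : ∀ a b, G.Adj a b → f a - f b ≤ 1) {u v : V}
    (h : G.Reachable u v) : f u - f v ≤ G.dist u v := by
  have walk_bound : ∀ {a b : V} (p : G.Walk a b), f a - f b ≤ p.length := by
    intro a b p
    induction p with
    | nil => simp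
    | cons hadj _ ih =>
      rw [SimpleGraph.Walk.length_cons, Nat.cast_succ]
      linarith [hf _ _ hadj]
  obtain ⟨p, hp⟩ := h.exists_walk_length_eq_dist
  exact hp ▸ walk_bound p

theorem ricci_of_adj {x y : V} (h : G.Adj x y) : ricci G x y = 1 - W G (rw G x) (rw G y) := by
  rw [ricci, SimpleGraph.dist_eq_one_iff_adj.mpr h, Nat.cast_one, div_one]

theorem rw_apply_eq_of_bijective {x y : V} {σ : V → V} (hσ : σ.Bijective)
    (hadj : ∀ u, G.Adj y (σ u) ↔ G.Adj x u) (u : V) : rw G y (σ u) = rw G x u := by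
  have hdeg : deg G y = deg G x :=
    (Nat.card_congr ((Equiv.ofBijective σ hσ).subtypeEquiv fun u => (hadj u).symm)).symm
  simp only [rw, hadj, hdeg]

theorem rw_nonneg {x u : V} : 0 ≤ rw G x u := by
  unfold rw
  split_ifs <;> positivity

variable [Fintype V]

theorem isCoupling_of_involutive {μ ν : V → ℝ} (hμ : ∀ u, 0 ≤ μ u) {σ : V → V}
    (hσ : σ.Involutive) (hν : ∀ u, ν (σ u) = μ u) :
    IsCoupling μ ν fun u v => if σ u = v then μ u else 0 := by
  refine ⟨fun u v => ?_, Set.toFinite _, fun u => ?_, fun v => ?_⟩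
  · dsimp only
    split_ifs
    exacts [hμ u, le_rfl]
  · simp [finsum_eq_sum_of_fintype]
  · simp [finsum_eq_sum_of_fintype, hσ.eq_iff, ← hν (σ v), hσ v]

theorem sub_le_cost_of_isCoupling (hG : G.Connected) {μ ν : V → ℝ} {A : V → V → ℝ}
    (hA : IsCoupling μ ν A) {f : V → ℝ} (hf : ∀ a b, G.Adj a b → f a - f b ≤ 1) :
    ∑ u, f u * μ u - ∑ v, f v * ν v ≤ ∑ᶠ u, ∑ᶠ v, A u v * G.dist u v := by
  obtain ⟨hA0, -, hrow, hcol⟩ := hA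
  simp only [finsum_eq_sum_of_fintype] at hrow hcol ⊢
  calc ∑ u, f u * μ u - ∑ v, f v * ν v = ∑ u, ∑ v, A u v * (f u - f v) := by
        simp only [← hrow, ← hcol, mul_sub, sum_sub_distrib, mul_sum]
        rw [sum_comm (f := fun v u => f v * A u v)]
        simp only [mul_comm]
    _ ≤ ∑ u, ∑ v, A u v * G.dist u v := sum_le_sum fun u _ => sum_le_sum fun v _ =>
        mul_le_mul_of_nonneg_left (sub_le_dist_of_adj hf (hG u v)) (hA0 u v)

theorem W_eq_of_involutive (hG : G.Connected) {μ ν : V → ℝ} (hμ : ∀ u, 0 ≤ μ u)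
    {σ : V → V} (hσ : σ.Involutive) (hν : ∀ u, ν (σ u) = μ u) {f : V → ℝ}
    (hf : ∀ a b, G.Adj a b → f a - f b ≤ 1)
    (htight : ∀ u, μ u ≠ 0 → (G.dist u (σ u) : ℝ) ≤ f u - f (σ u)) :
    W G μ ν = ∑ u, μ u * (f u - f (σ u)) := by
  have hdual : ∑ u, μ u * (f u - f (σ u)) = ∑ u, f u * μ u - ∑ v, f v * ν v := by
    rw [← Equiv.sum_comp (hσ.toPerm σ) fun v => f v * ν v]
    simp [hν, mul_sub, sum_sub_distrib, mul_comm]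
  have hplan : ∑ᶠ u, ∑ᶠ v, (if σ u = v then μ u else 0) * (G.dist u v : ℝ)
      ≤ ∑ u, μ u * (f u - f (σ u)) := by
    simp only [finsum_eq_sum_of_fintype, ite_mul, zero_mul, sum_ite_eq, mem_univ, if_true]
    refine sum_le_sum fun u _ => ?_
    rcases (hμ u).eq_or_lt with h | h
    · simp [← h]
    · exact mul_le_mul_of_nonneg_left (htight u h.ne') h.le
  have hlower : ∀ r ∈ {r | ∃ A, IsCoupling μ ν A ∧
      r = ∑ᶠ u, ∑ᶠ v, A u v * (G.dist u v : ℝ)}, ∑ u, μ u * (f u - f (σ u)) ≤ r := by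
    rintro r ⟨A, hA, rfl⟩
    exact hdual ▸ sub_le_cost_of_isCoupling hG hA hf
  have hmem := isCoupling_of_involutive hμ hσ hν
  exact le_antisymm (csInf_le_of_le ⟨_, hlower⟩ ⟨_, hmem, rfl⟩ hplan)
    (le_csInf ⟨_, _, hmem, rfl⟩ hlower)

end Transport

section Glue

variable {n m : ℕ}

@[simp] theorem glue_adj_inl_inl {i j : Fin n} :
    (glue n m).Adj (.inl i) (.inl j) ↔ i ≠ j := Iff.rfl

@[simp] theorem glue_adj_inr_inr {i j : Fin n} :
    (glue n m).Adj (.inr i) (.inr j) ↔ i ≠ j := Iff.rfl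

@[simp] theorem glue_adj_inl_inr {i j : Fin n} :
    (glue n m).Adj (.inl i) (.inr j) ↔ cross m i j := Iff.rfl

@[simp] theorem glue_adj_inr_inl {i j : Fin n} :
    (glue n m).Adj (.inr j) (.inl i) ↔ cross m i j := Iff.rfl

theorem glue_connected (hn : 0 < n) : (glue n m).Connected := by
  have hu₀ : (glue n m).Adj (.inr ⟨0, hn⟩) (.inl ⟨0, hn⟩) := Or.inl ⟨rfl, rfl⟩
  have to_u₀ : ∀ x, (glue n m).Reachable x (.inl ⟨0, hn⟩) := by
    rintro (i | i) <;> by_cases hi : i = ⟨0, hn⟩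
    · exact hi ▸ .rfl
    · exact SimpleGraph.Adj.reachable (glue_adj_inl_inl.mpr hi)
    · exact hi ▸ hu₀.reachable
    · exact (SimpleGraph.Adj.reachable (glue_adj_inr_inr.mpr hi)).trans hu₀.reachable
  have : Nonempty (Fin n ⊕ Fin n) := ⟨.inl ⟨0, hn⟩⟩
  exact ⟨fun x y => (to_u₀ x).trans (to_u₀ y).symm⟩

def potential (m : ℕ) : Fin n ⊕ Fin n → ℝ
  | .inl i => if (i : ℕ) ≤ m then 2 else 3
  | .inr i => if (i : ℕ) ≤ m then 1 else 0

theorem potential_sub_le_one :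
    ∀ a b, (glue n m).Adj a b → potential m a - potential m b ≤ 1 := by
  rintro (i | i) (j | j) h <;>
    simp only [potential, glue_adj_inl_inr, glue_adj_inr_inl, cross] at h ⊢ <;>
    split_ifs <;> norm_num <;> omega

def bridgeSwap (m : ℕ) (h : m + 1 < n) : Fin n ⊕ Fin n → Fin n ⊕ Fin n
  | .inl i => if (i : ℕ) = 0 then .inl ⟨m + 1, h⟩
      else if (i : ℕ) = m + 1 then .inl ⟨0, by omega⟩
      else if m + 2 ≤ (i : ℕ) then .inr i else .inl i
  | .inr i => if (i : ℕ) = 0 then .inr ⟨m + 1, h⟩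
      else if (i : ℕ) = m + 1 then .inr ⟨0, by omega⟩
      else if m + 2 ≤ (i : ℕ) then .inl i else .inr i

theorem bridgeSwap_involutive (h : m + 1 < n) : (bridgeSwap m h).Involutive := by
  rintro (i | i) <;> simp only [bridgeSwap] <;> split_ifs <;> simp_all [Fin.ext_iff]

theorem glue_adj_bridgeSwap_iff (h : m + 1 < n) (u : Fin n ⊕ Fin n) :
    (glue n m).Adj (.inr ⟨0, by omega⟩) (bridgeSwap m h u) ↔
      (glue n m).Adj (.inl ⟨0, by omega⟩) u := by
  rcases u with i | i <;> simp only [bridgeSwap] <;> split_ifs <;>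
    simp_all [cross, Fin.ext_iff] <;> omega

theorem glue_dist_bridgeSwap_le (h : m + 1 < n) {u : Fin n ⊕ Fin n}
    (hu : (glue n m).Adj (.inl ⟨0, by omega⟩) u) :
    ((glue n m).dist u (bridgeSwap m h u) : ℝ) ≤
      potential m u - potential m (bridgeSwap m h u) := by
  set u₀ : Fin n := ⟨0, by omega⟩
  have dist_le_one : ∀ {a b}, (glue n m).Adj a b → ((glue n m).dist a b : ℝ) ≤ 1 :=
    fun hab => by rw [SimpleGraph.dist_eq_one_iff_adj.mpr hab, Nat.cast_one]
  rcases u with i | i <;> simp only [bridgeSwap] <;> split_ifs with h₀ h₁ h₂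
  · simp_all [u₀, Fin.ext_iff]
  · have hi : i ≠ u₀ := fun hi => by simp [hi, u₀] at h₁
    have := dist_le_one (glue_adj_inl_inl.mpr hi)
    simp only [potential, h₁]
    norm_num
    simpa [u₀] using this
  · have hi : i ≠ u₀ := fun hi => by simp [hi, u₀] at h₀
    have hbridge : (glue n m).Adj (.inl u₀) (.inr u₀) := Or.inl ⟨rfl, rfl⟩
    have := SimpleGraph.dist_le ((((SimpleGraph.Walk.nil (G := glue n m) (u := .inr i)).cons
      (glue_adj_inr_inr.mpr hi.symm)).cons hbridge).cons (glue_adj_inl_inl.mpr hi))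
    simp only [potential, if_neg (show ¬(i : ℕ) ≤ m by omega)]
    norm_num
    exact_mod_cast this
  · simp
  · have hi : i ≠ ⟨m + 1, h⟩ := fun hi => by simp [hi] at h₀
    have := dist_le_one (glue_adj_inr_inr.mpr hi)
    simp only [potential, h₀]
    norm_num
    simpa using this
  · simp [u₀, cross] at hu
    omega
  · simp [u₀, cross] at hu
    omega
  · simp

theorem glue_deg_inl_zero (hmn : m + 2 ≤ n) :
    (deg (glue n m) (.inl ⟨0, by omega⟩) : ℝ) = n + m := by
  rw [deg, Nat.card_eq_fintype_card, SimpleGraph.card_neighborSet_eq_degree,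
    ← SimpleGraph.card_neighborFinset_eq_degree, SimpleGraph.neighborFinset_eq_filter,
    natCast_card_filter, Fintype.sum_sum_type]
  have hK : ∀ i : Fin n, (if (glue n m).Adj (.inl ⟨0, by omega⟩) (.inl i) then (1 : ℝ) else 0)
      = blocks m 0 1 1 1 i := by
    intro i
    simp only [blocks, glue_adj_inl_inl, ne_eq, Fin.ext_iff]
    split_ifs <;> first | omega | norm_num
  have hK' : ∀ i : Fin n, (if (glue n m).Adj (.inl ⟨0, by omega⟩) (.inr i) then (1 : ℝ) else 0)
      = blocks m 1 1 0 0 i := by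
    intro i
    simp only [blocks, glue_adj_inl_inr, cross, true_and]
    split_ifs <;> first | omega | norm_num
  simp only [hK, hK', sum_blocks hmn]
  ring

theorem sum_glue_potential_drop (h : m + 1 < n) :
    ∑ u, (if (glue n m).Adj (.inl ⟨0, by omega⟩) u
      then potential m u - potential m (bridgeSwap m h u) else 0) = 3 * n - 3 * m - 4 := by
  rw [Fintype.sum_sum_type]
  have hK : ∀ i : Fin n, (if (glue n m).Adj (.inl ⟨0, by omega⟩) (.inl i)
      then potential m (.inl i) - potential m (bridgeSwap m h (.inl i)) else 0)
      = blocks m 0 0 1 3 i := by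
    intro i
    simp only [blocks, glue_adj_inl_inl, ne_eq, Fin.ext_iff, bridgeSwap]
    split_ifs <;> norm_num [potential, *] <;> omega
  have hK' : ∀ i : Fin n, (if (glue n m).Adj (.inl ⟨0, by omega⟩) (.inr i)
      then potential m (.inr i) - potential m (bridgeSwap m h (.inr i)) else 0)
      = blocks m 1 0 0 0 i := by
    intro i
    simp only [blocks, glue_adj_inl_inr, cross, true_and, bridgeSwap]
    split_ifs <;> norm_num [potential, *] <;> omega
  simp only [hK, hK', sum_blocks h]
  ring

theorem W_glue_bridge (hmn : m + 2 ≤ n) :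
    W (glue n m) (rw (glue n m) (.inl ⟨0, by omega⟩)) (rw (glue n m) (.inr ⟨0, by omega⟩))
      = (3 * n - 3 * m - 4) / (n + m) := by
  have h : m + 1 < n := by omega
  have hσ := bridgeSwap_involutive h
  have hν := rw_apply_eq_of_bijective hσ.bijective (glue_adj_bridgeSwap_iff h)
  have hsupp : ∀ u, rw (glue n m) (.inl ⟨0, by omega⟩) u ≠ 0 →
      (glue n m).Adj (.inl ⟨0, by omega⟩) u := fun u hu => by
    by_contra hadj
    exact hu (if_neg hadj)
  rw [W_eq_of_involutive (glue_connected (by omega)) (fun _ => rw_nonneg) hσ hν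
    potential_sub_le_one fun u hu => glue_dist_bridgeSwap_le h (hsupp u hu)]
  have hterm : ∀ u, rw (glue n m) (.inl ⟨0, by omega⟩) u
      * (potential m u - potential m (bridgeSwap m h u))
      = (deg (glue n m) (.inl ⟨0, by omega⟩) : ℝ)⁻¹
        * (if (glue n m).Adj (.inl ⟨0, by omega⟩) u
          then potential m u - potential m (bridgeSwap m h u) else 0) := fun u => by
    unfold rw
    split_ifs <;> ring
  rw [Finset.sum_congr rfl fun u _ => hterm u, ← Finset.mul_sum, sum_glue_potential_drop h,
    glue_deg_inl_zero hmn, inv_mul_eq_div]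

end Glue

end OR

theorem glue_ricci_bridge_general (n m : ℕ) (hm : 1 ≤ m) (hm' : m ≤ n - 2) :
    OR.ricci (OR.glue n m) (Sum.inl (⟨0, by omega⟩ : Fin n)) (Sum.inr (⟨0, by omega⟩ : Fin n))
      = (4 * (m : ℝ) - 2 * n + 4) / ((n : ℝ) + m) ∧
    (0 ≤ OR.ricci (OR.glue n m) (Sum.inl (⟨0, by omega⟩ : Fin n))
        (Sum.inr (⟨0, by omega⟩ : Fin n)) ↔ ((n : ℝ) - 2) / 2 ≤ (m : ℝ)) := by
  have hmn : m + 2 ≤ n := by omega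
  have hpos : (0 : ℝ) < n + m := by positivity
  have hκ : OR.ricci (OR.glue n m) (.inl ⟨0, by omega⟩) (.inr ⟨0, by omega⟩)
      = (4 * (m : ℝ) - 2 * n + 4) / (n + m) := by
    rw [OR.ricci_of_adj (Or.inl ⟨rfl, rfl⟩), OR.W_glue_bridge hmn]
    field_simp
    ring
  refine ⟨hκ, ?_⟩
  rw [hκ, le_div_iff₀ hpos, zero_mul]
  constructor <;> intro h <;> linarith
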